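/- arXiv:2112.12840 — 3 statements merged into one kernel-verified Lean document; each statement's English description precedes it below -/
import Mathlib

section
/- Let K be a field, π a nonzero element of K, K̄ a fixed algebraic closure of K, n ≥ 1 an integer, and α ∈ K̄ an element with α^n = π. Then there exists a family (π^{1/m})_{m ≥ 1} of elements of K̄ such that π^{1/1} = π, (π^{1/(m₁m₂)})^{m₂} = π^{1/m₁} for all integers m₁, m₂ ≥ 1, and moreover π^{1/n} = α. -/
/-!
Choose successive roots `s 0 = x`, `s (k + 1) ^ (k + 1) = s k`, so that `s k` is a `k!`-th root
of `x`; then `s m ^ (m - 1)!` is an `m`-th root of `x`, and these are compatible because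
`s (m₁ m₂)` lies above `s m₁` in the tower. A compatible system `ρ` through `α` yields one through
`α ^ n = π` by raising it to the `n`-th power; its value at `n` is `ρ n ^ n = ρ 1 = α`.
-/

open Nat

section CompatibleRoots

variable {M : Type*} [Monoid M]

def IsCompatibleRootSystem (r : ℕ → M) : Prop :=
  ∀ m₁ m₂ : ℕ, 1 ≤ m₁ → 1 ≤ m₂ → r (m₁ * m₂) ^ m₂ = r m₁

theorem IsCompatibleRootSystem.pow {r : ℕ → M} (hr : IsCompatibleRootSystem r) (n : ℕ) :
    IsCompatibleRootSystem fun m => r m ^ n := by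
  intro m₁ m₂ h₁ h₂
  rw [pow_right_comm, hr m₁ m₂ h₁ h₂]

theorem exists_root_tower (hroot : ∀ (y : M) (k : ℕ), 0 < k → ∃ z, z ^ k = y) (x : M) :
    ∃ s : ℕ → M, s 0 = x ∧ ∀ k, s (k + 1) ^ (k + 1) = s k := by
  choose f hf using fun (y : M) (k : ℕ) => hroot y (k + 1) k.succ_pos
  exact ⟨fun k => Nat.rec x (fun k y => f y k) k, rfl, fun k => hf _ k⟩

theorem root_tower_pow_factorial_div {s : ℕ → M} (hs : ∀ k, s (k + 1) ^ (k + 1) = s k)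
    {j k : ℕ} (hjk : j ≤ k) : s k ^ (k ! / j !) = s j := by
  induction k, hjk using Nat.le_induction with
  | base => rw [Nat.div_self j.factorial_pos, pow_one]
  | succ k hjk ih =>
    rw [factorial_succ, Nat.mul_div_assoc _ (factorial_dvd_factorial hjk), pow_mul, hs, ih]

theorem isCompatibleRootSystem_of_root_tower {s : ℕ → M} (hs : ∀ k, s (k + 1) ^ (k + 1) = s k) :
    IsCompatibleRootSystem fun m => s m ^ (m - 1)! := by
  intro m₁ m₂ h₁ h₂
  have hle : m₁ ≤ m₁ * m₂ := Nat.le_mul_of_pos_right m₁ h₂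
  have hexp : (m₁ * m₂ - 1)! * m₂ = (m₁ * m₂)! / m₁ ! * (m₁ - 1)! := by
    apply Nat.eq_of_mul_eq_mul_left h₁
    calc m₁ * ((m₁ * m₂ - 1)! * m₂) = m₁ * m₂ * (m₁ * m₂ - 1)! := by ring
      _ = (m₁ * m₂)! / m₁ ! * (m₁ * (m₁ - 1)!) := by
        rw [mul_factorial_pred (by positivity), mul_factorial_pred (by omega),
          Nat.div_mul_cancel (factorial_dvd_factorial hle)]
      _ = m₁ * ((m₁ * m₂)! / m₁ ! * (m₁ - 1)!) := by ring
  rw [← pow_mul, hexp, pow_mul, root_tower_pow_factorial_div hs hle]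

theorem exists_isCompatibleRootSystem (hroot : ∀ (y : M) (k : ℕ), 0 < k → ∃ z, z ^ k = y)
    (x : M) : ∃ r : ℕ → M, r 1 = x ∧ IsCompatibleRootSystem r := by
  obtain ⟨s, hs0, hs⟩ := exists_root_tower hroot x
  refine ⟨fun m => s m ^ (m - 1)!, ?_, isCompatibleRootSystem_of_root_tower hs⟩
  simpa [hs0] using hs 0

end CompatibleRoots

theorem exists_compatible_system_of_roots_through_general
    {K Kbar : Type*} [Field K] [Field Kbar] [Algebra K Kbar] [IsAlgClosure K Kbar]
    (π : K) (n : ℕ) (hn : 1 ≤ n) (α : Kbar)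
    (hα : α ^ n = algebraMap K Kbar π) :
    ∃ r : ℕ → Kbar,
      r 1 = algebraMap K Kbar π ∧
      (∀ m₁ m₂ : ℕ, 1 ≤ m₁ → 1 ≤ m₂ → (r (m₁ * m₂)) ^ m₂ = r m₁) ∧
      r n = α := by
  have : IsAlgClosed Kbar := IsAlgClosure.isAlgClosed K
  obtain ⟨ρ, hρ1, hρ⟩ :=
    exists_isCompatibleRootSystem (fun y _ hk => IsAlgClosed.exists_pow_nat_eq y hk) α
  refine ⟨fun m => ρ m ^ n, by simp only [hρ1, hα], hρ.pow n, ?_⟩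
  simpa [hρ1] using hρ 1 n le_rfl hn

/-- Let `K` be a field, `π` a nonzero element of `K`, `K̄` a fixed algebraic
closure of `K`, `n ≥ 1` an integer, and `α ∈ K̄` with `α^n = π`. Then there exists a family
`(π^{1/m})_{m ≥ 1}` of elements of `K̄` such that `π^{1/1} = π`,
`(π^{1/(m₁m₂)})^{m₂} = π^{1/m₁}` for all `m₁, m₂ ≥ 1`, and moreover `π^{1/n} = α`. -/
theorem exists_compatible_system_of_roots_through
    {K Kbar : Type*} [Field K] [Field Kbar] [Algebra K Kbar] [IsAlgClosure K Kbar]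
    (π : K) (hπ : π ≠ 0) (n : ℕ) (hn : 1 ≤ n) (α : Kbar)
    (hα : α ^ n = algebraMap K Kbar π) :
    ∃ r : ℕ → Kbar,
      r 1 = algebraMap K Kbar π ∧
      (∀ m₁ m₂ : ℕ, 1 ≤ m₁ → 1 ≤ m₂ → (r (m₁ * m₂)) ^ m₂ = r m₁) ∧
      r n = α :=
  exists_compatible_system_of_roots_through_general π n hn α hα
end

section
/- Let L be a field, v : L^× → ℤ an additive valuation, and G a finite group acting faithfully on L by field automorphisms such that v(σ(x)) = v(x) for every σ ∈ G and every nonzero x ∈ L. Let K = L^G be the fixed field and let k ⊆ K be a subfield with v(k^×) = ℤ. Let O_v be the valuation ring of v, L₀ its residue field, and p = char(L₀) ≥ 0. Assume that G is weakly tame at p, i.e., either p = 0, or p > 0 and G has no nontrivial normal p-subgroup. Then the induced action of G on the residue field L₀ is faithful. -/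
/-!
Let `G_m` be the subgroup of those `σ` with `v (σ • x - x) ≥ v x + m` for all `x`. If `σ` acts
trivially on the residue field, dividing `x` by an element of `k` of the same valuation (which
`σ` fixes) shows `σ ∈ G_1`. If moreover `σ ^ n = 1` for some `n` that is a unit of `O_v`,
then for `σ ∈ G_m` the element `z = x - n⁻¹ ∑ σ^i x` satisfies `v z ≥ v x + m` and
`σ z - z = σ x - x`, so `σ ∈ G_{m+1}`; hence `σ` lies in `⋂ G_m = 1`. For `p = 0` take
`n = orderOf σ`. For `p > 0` (necessarily prime) the same argument applied to the `p'`-part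
of each element shows that the normal subgroup `G_1` is a `p`-group, hence trivial by weak
tameness.
-/

structure IsIntAddValuation {L : Type*} [Field L] (v : L → ℤ) : Prop where
  map_mul : ∀ x y : L, x ≠ 0 → y ≠ 0 → v (x * y) = v x + v y
  min_le_map_add : ∀ x y : L, x ≠ 0 → y ≠ 0 → x + y ≠ 0 → min (v x) (v y) ≤ v (x + y)

theorem smul_sum_range_pow_smul {M A : Type*} [Monoid M] [AddCommGroup A]
    [DistribMulAction M A] {σ : M} {n : ℕ} (hσ : σ ^ n = 1) (x : A) :
    σ • ∑ i ∈ Finset.range n, σ ^ i • x = ∑ i ∈ Finset.range n, σ ^ i • x := by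
  have h := Finset.sum_range_succ' (fun i => σ ^ i • x) n
  rw [Finset.sum_range_succ_comm, hσ, pow_zero, add_comm] at h
  simp only [Finset.smul_sum, smul_smul, ← pow_succ']
  exact (add_right_cancel h).symm

namespace IsIntAddValuation

variable {L : Type*} [Field L] {v : L → ℤ}

theorem map_one (hv : IsIntAddValuation v) : v 1 = 0 := by
  have h := hv.map_mul 1 1 one_ne_zero one_ne_zero
  rw [mul_one] at h
  omega

theorem map_neg (hv : IsIntAddValuation v) {x : L} (hx : x ≠ 0) : v (-x) = v x := by
  have h1 := hv.map_mul (-1) (-1) (by norm_num) (by norm_num)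
  have h2 := hv.map_mul (-1) x (by norm_num) hx
  rw [neg_one_mul, neg_neg, hv.map_one] at h1
  rw [neg_one_mul] at h2
  omega

def geAddSubgroup (hv : IsIntAddValuation v) (c : ℤ) : AddSubgroup L where
  carrier := {x | x = 0 ∨ c ≤ v x}
  zero_mem' := Or.inl rfl
  add_mem' {x y} hx hy := by
    obtain rfl | hx0 := eq_or_ne x 0
    · simpa using hy
    obtain rfl | hy0 := eq_or_ne y 0
    · simpa using hx
    obtain hxy | hxy := eq_or_ne (x + y) 0
    · exact Or.inl hxy
    have := hv.min_le_map_add x y hx0 hy0 hxy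
    have := hx.resolve_left hx0
    have := hy.resolve_left hy0
    exact Or.inr (by omega)
  neg_mem' {x} hx := by
    obtain rfl | hx0 := eq_or_ne x 0
    · simp
    exact Or.inr (hv.map_neg hx0 ▸ hx.resolve_left hx0)

theorem mem_geAddSubgroup (hv : IsIntAddValuation v) {c : ℤ} {x : L} :
    x ∈ hv.geAddSubgroup c ↔ x = 0 ∨ c ≤ v x :=
  Iff.rfl

theorem geAddSubgroup_antitone (hv : IsIntAddValuation v) : Antitone hv.geAddSubgroup :=
  fun _ _ hcd _ hx => hx.imp_right hcd.trans

theorem natCast_mem_geAddSubgroup_zero (hv : IsIntAddValuation v) (n : ℕ) :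
    (n : L) ∈ hv.geAddSubgroup 0 := by
  rw [← nsmul_one]
  exact nsmul_mem (Or.inr hv.map_one.ge) n

theorem mem_geAddSubgroup_self (hv : IsIntAddValuation v) (x : L) :
    x ∈ hv.geAddSubgroup (v x) :=
  Or.inr le_rfl

theorem mul_mem_geAddSubgroup (hv : IsIntAddValuation v) {a b : L} {c d : ℤ}
    (ha : a ∈ hv.geAddSubgroup c) (hb : b ∈ hv.geAddSubgroup d) :
    a * b ∈ hv.geAddSubgroup (c + d) := by
  obtain rfl | ha0 := eq_or_ne a 0
  · simp
  obtain rfl | hb0 := eq_or_ne b 0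
  · simp
  have := ha.resolve_left ha0
  have := hb.resolve_left hb0
  exact Or.inr (by rw [hv.map_mul a b ha0 hb0]; omega)

theorem mem_geAddSubgroup_of_mul_mem (hv : IsIntAddValuation v) {a z : L} {c : ℤ}
    (ha : a ∉ hv.geAddSubgroup 1) (h : a * z ∈ hv.geAddSubgroup c) :
    z ∈ hv.geAddSubgroup c := by
  rw [mem_geAddSubgroup, not_or, not_le] at ha
  obtain rfl | hz := eq_or_ne z 0
  · exact zero_mem _
  refine Or.inr ?_
  have := h.resolve_left (mul_ne_zero ha.1 hz)
  rw [hv.map_mul a z ha.1 hz] at this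
  omega

theorem mem_or_mem_geAddSubgroup_of_mul_mem (hv : IsIntAddValuation v) {a b : L}
    (ha : a ∈ hv.geAddSubgroup 0) (hb : b ∈ hv.geAddSubgroup 0)
    (hab : a * b ∈ hv.geAddSubgroup 1) :
    a ∈ hv.geAddSubgroup 1 ∨ b ∈ hv.geAddSubgroup 1 := by
  obtain rfl | ha0 := eq_or_ne a 0
  · exact Or.inl (zero_mem _)
  obtain rfl | hb0 := eq_or_ne b 0
  · exact Or.inr (zero_mem _)
  have hvab := hab.resolve_left (mul_ne_zero ha0 hb0)
  rw [hv.map_mul a b ha0 hb0] at hvab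
  have := ha.resolve_left ha0
  have := hb.resolve_left hb0
  exact (by omega : 1 ≤ v a ∨ 1 ≤ v b).imp Or.inr Or.inr

theorem prime_of_natCast_mem_iff (hv : IsIntAddValuation v) {p : ℕ} (hp0 : p ≠ 0)
    (hp : ∀ n : ℕ, (n : L) ∈ hv.geAddSubgroup 1 ↔ p ∣ n) : p.Prime := by
  have hp1 : ¬ p ∣ 1 := by
    rw [← hp, Nat.cast_one, mem_geAddSubgroup, hv.map_one]
    simp
  refine Nat.prime_iff.mpr
    ⟨hp0, fun h => hp1 (Nat.isUnit_iff.mp h ▸ dvd_rfl), fun a b hab => ?_⟩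
  rw [← hp, Nat.cast_mul] at hab
  simpa only [hp] using hv.mem_or_mem_geAddSubgroup_of_mul_mem
    (hv.natCast_mem_geAddSubgroup_zero a) (hv.natCast_mem_geAddSubgroup_zero b) hab


section Action

variable {G : Type*} [Group G] [MulSemiringAction G L]

theorem smul_mem_geAddSubgroup_iff (hv : IsIntAddValuation v)
    (hinv : ∀ (σ : G) (x : L), v (σ • x) = v x) (σ : G) {c : ℤ} {x : L} :
    σ • x ∈ hv.geAddSubgroup c ↔ x ∈ hv.geAddSubgroup c := by
  rw [mem_geAddSubgroup, mem_geAddSubgroup, smul_eq_zero_iff_eq, hinv]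

def ramificationSubgroup (hv : IsIntAddValuation v)
    (hinv : ∀ (σ : G) (x : L), v (σ • x) = v x) (m : ℤ) : Subgroup G where
  carrier := {σ | ∀ x : L, σ • x - x ∈ hv.geAddSubgroup (v x + m)}
  one_mem' x := by simp
  mul_mem' {σ τ} hσ hτ x := by
    have key : (σ * τ) • x - x = (σ • (τ • x) - τ • x) + (τ • x - x) := by
      rw [mul_smul]; abel
    rw [key]
    exact add_mem (hinv τ x ▸ hσ (τ • x)) (hτ x)
  inv_mem' {σ} hσ x := by
    have key : σ⁻¹ • x - x = -(σ • (σ⁻¹ • x) - σ⁻¹ • x) := by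
      rw [smul_inv_smul]; abel
    rw [key]
    exact neg_mem (hinv σ⁻¹ x ▸ hσ (σ⁻¹ • x))

theorem ramificationSubgroup_antitone (hv : IsIntAddValuation v)
    (hinv : ∀ (σ : G) (x : L), v (σ • x) = v x) : Antitone (hv.ramificationSubgroup hinv) :=
  fun _ _ hmn _ hσ x => hv.geAddSubgroup_antitone (by linarith) (hσ x)

theorem ramificationSubgroup_normal (hv : IsIntAddValuation v)
    (hinv : ∀ (σ : G) (x : L), v (σ • x) = v x) (m : ℤ) :
    (hv.ramificationSubgroup hinv m).Normal where
  conj_mem σ hσ τ x := by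
    have key : (τ * σ * τ⁻¹) • x - x = τ • (σ • (τ⁻¹ • x) - τ⁻¹ • x) := by
      rw [smul_sub, mul_smul, mul_smul, smul_inv_smul]
    rw [key, hv.smul_mem_geAddSubgroup_iff hinv, ← hinv τ⁻¹ x]
    exact hσ _

theorem smul_sub_self_mem_geAddSubgroup (hv : IsIntAddValuation v)
    (hinv : ∀ (σ : G) (x : L), v (σ • x) = v x) {m c : ℤ} {σ : G}
    (hσ : σ ∈ hv.ramificationSubgroup hinv m) {z : L} (hz : z ∈ hv.geAddSubgroup c) :
    σ • z - z ∈ hv.geAddSubgroup (c + m) := by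
  obtain rfl | hz0 := eq_or_ne z 0
  · simp
  exact hv.geAddSubgroup_antitone (by linarith [hz.resolve_left hz0]) (hσ z)

theorem mem_ramificationSubgroup_one (hv : IsIntAddValuation v)
    (hinv : ∀ (σ : G) (x : L), v (σ • x) = v x) {σ : G}
    (hres : ∀ x : L, x ≠ 0 → 0 ≤ v x → σ • x - x ∈ hv.geAddSubgroup 1)
    (hfix : ∀ m : ℤ, ∃ c : L, c ≠ 0 ∧ v c = m ∧ σ • c = c) :
    σ ∈ hv.ramificationSubgroup hinv 1 := by
  intro x
  obtain rfl | hx := eq_or_ne x 0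
  · simp
  obtain ⟨c, hc0, hvc, hσc⟩ := hfix (v x)
  set u := x * c⁻¹
  have hxu : x = u * c := (inv_mul_cancel_right₀ hc0 x).symm
  have hu0 : u ≠ 0 := by simpa [u] using ⟨hx, hc0⟩
  have hvu : v u = 0 := by
    have := hv.map_mul u c hu0 hc0
    rw [← hxu] at this
    omega
  have key : σ • x - x = (σ • u - u) * c := by
    rw [hxu, smul_mul', hσc, sub_mul]
  rw [key, add_comm, ← hvc]
  exact hv.mul_mem_geAddSubgroup (hres u hu0 hvu.ge) (hv.mem_geAddSubgroup_self c)

theorem mem_ramificationSubgroup_add_one (hv : IsIntAddValuation v)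
    (hinv : ∀ (σ : G) (x : L), v (σ • x) = v x) {m : ℤ} {n : ℕ} {σ : G}
    (hσ₁ : σ ∈ hv.ramificationSubgroup hinv 1) (hσm : σ ∈ hv.ramificationSubgroup hinv m)
    (hσn : σ ^ n = 1) (hn : (n : L) ∉ hv.geAddSubgroup 1) :
    σ ∈ hv.ramificationSubgroup hinv (m + 1) := by
  intro x
  set y := (n : L)⁻¹ * ∑ i ∈ Finset.range n, σ ^ i • x
  have hn_fixed : σ • (n : L) = n := map_natCast (MulSemiringAction.toRingHom G L σ) n
  have hy : σ • y = y := by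
    rw [smul_mul', smul_sum_range_pow_smul hσn, smul_inv'', hn_fixed]
  have hn0 : (n : L) ≠ 0 := fun h => hn (h ▸ zero_mem _)
  have hxy : (n : L) * (x - y) = ∑ i ∈ Finset.range n, -(σ ^ i • x - x) := by
    simp only [y, mul_sub, ← mul_assoc, mul_inv_cancel₀ hn0, one_mul, neg_sub,
      Finset.sum_sub_distrib, Finset.sum_const, Finset.card_range, nsmul_eq_mul]
  have hz : x - y ∈ hv.geAddSubgroup (v x + m) :=
    hv.mem_geAddSubgroup_of_mul_mem hn (hxy ▸ sum_mem fun i _ => neg_mem (pow_mem hσm i x))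
  have key : σ • x - x = σ • (x - y) - (x - y) := by
    rw [smul_sub, hy]; abel
  rw [key, ← add_assoc]
  exact hv.smul_sub_self_mem_geAddSubgroup hinv hσ₁ hz

theorem eq_one_of_forall_mem_ramificationSubgroup (hv : IsIntAddValuation v)
    (hinv : ∀ (σ : G) (x : L), v (σ • x) = v x) [FaithfulSMul G L] {σ : G}
    (hσ : ∀ m : ℕ, σ ∈ hv.ramificationSubgroup hinv m) : σ = 1 := by
  refine eq_of_smul_eq_smul (α := L) fun x => ?_
  rw [one_smul, ← sub_eq_zero]
  by_contra h
  have hm := (hσ (v (σ • x - x) - v x + 1).toNat x).resolve_left h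
  have := Int.self_le_toNat (v (σ • x - x) - v x + 1)
  omega

theorem eq_one_of_mem_ramificationSubgroup_one (hv : IsIntAddValuation v)
    (hinv : ∀ (σ : G) (x : L), v (σ • x) = v x) [FaithfulSMul G L] {n : ℕ} {σ : G}
    (hσ₁ : σ ∈ hv.ramificationSubgroup hinv 1) (hσn : σ ^ n = 1)
    (hn : (n : L) ∉ hv.geAddSubgroup 1) : σ = 1 := by
  refine hv.eq_one_of_forall_mem_ramificationSubgroup hinv fun m => ?_
  induction m with
  | zero => exact hv.ramificationSubgroup_antitone hinv zero_le_one hσ₁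
  | succ m ih =>
    push_cast
    exact hv.mem_ramificationSubgroup_add_one hinv hσ₁ ih hσn hn

theorem isPGroup_ramificationSubgroup_one [Finite G] (hv : IsIntAddValuation v)
    (hinv : ∀ (σ : G) (x : L), v (σ • x) = v x) [FaithfulSMul G L] {p : ℕ}
    (hp : p.Prime) (hpL : ∀ n : ℕ, (n : L) ∈ hv.geAddSubgroup 1 ↔ p ∣ n) :
    IsPGroup p (hv.ramificationSubgroup hinv 1) := by
  rintro ⟨τ, hτ⟩
  have hτp : (τ ^ ordProj[p] (orderOf τ)) ^ ordCompl[p] (orderOf τ) = 1 := by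
    rw [← pow_mul, Nat.ordProj_mul_ordCompl_eq_self, pow_orderOf_eq_one]
  exact ⟨(orderOf τ).factorization p, Subtype.ext <|
    hv.eq_one_of_mem_ramificationSubgroup_one hinv (pow_mem hτ _) hτp
      ((hpL _).not.mpr (Nat.not_dvd_ordCompl hp (orderOf_pos τ).ne'))⟩

end Action

end IsIntAddValuation

/-- Let `L` be a field with an additive valuation `v : L^× → ℤ`, and let `G`
be a finite group acting faithfully on `L` by field automorphisms preserving `v`. Let
`K = L^G`, let `k ⊆ K` be a subfield with `v(k^×) = ℤ`, and let `p ≥ 0` be the characteristic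
of the residue field `L₀` of `v` (encoded by: for `n : ℕ`, the image of `n` lies in the
maximal ideal `{x : x = 0 ∨ v x ≥ 1}` iff `p ∣ n`). If `G` is weakly tame at `p` (either
`p = 0`, or `p > 0` and `G` has no nontrivial normal `p`-subgroup), then the induced action
of `G` on `L₀` is faithful: any `σ ∈ G` acting trivially on the residue field (i.e. with
`σ • x ≡ x` mod the maximal ideal for every `x` in the valuation ring) is the identity. -/
theorem residue_action_faithful
    {L : Type*} [Field L] (v : L → ℤ)
    (hmul : ∀ x y : L, x ≠ 0 → y ≠ 0 → v (x * y) = v x + v y)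
    (hadd : ∀ x y : L, x ≠ 0 → y ≠ 0 → x + y ≠ 0 → min (v x) (v y) ≤ v (x + y))
    {G : Type*} [Group G] [Finite G] [MulSemiringAction G L] [FaithfulSMul G L]
    (hinv : ∀ (σ : G) (x : L), x ≠ 0 → v (σ • x) = v x)
    (k : Subfield L) (hk : k ≤ FixedPoints.subfield G L)
    (hsurj : ∀ m : ℤ, ∃ x ∈ k, x ≠ 0 ∧ v x = m)
    (p : ℕ) (hp : ∀ n : ℕ, ((n : L) = 0 ∨ 1 ≤ v (n : L)) ↔ p ∣ n)
    (htame : p = 0 ∨ (0 < p ∧ ∀ Q : Subgroup G, Q.Normal → IsPGroup p ↥Q → Q = ⊥)) :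
    ∀ σ : G, (∀ x : L, x ≠ 0 → 0 ≤ v x → (σ • x - x = 0 ∨ 1 ≤ v (σ • x - x))) → σ = 1 := by
  intro σ hσ
  have hv : IsIntAddValuation v := ⟨hmul, hadd⟩
  have hsmul : ∀ (τ : G) (x : L), v (τ • x) = v x := fun τ x => by
    obtain rfl | hx := eq_or_ne x 0
    · rw [smul_zero]
    · exact hinv τ x hx
  have hσ₁ : σ ∈ hv.ramificationSubgroup hsmul 1 :=
    hv.mem_ramificationSubgroup_one hsmul hσ fun m => by
      obtain ⟨c, hck, hc0, hvc⟩ := hsurj m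
      exact ⟨c, hc0, hvc, hk hck σ⟩
  rcases htame with rfl | ⟨hp0, htame⟩
  · refine hv.eq_one_of_mem_ramificationSubgroup_one hsmul hσ₁ (pow_orderOf_eq_one σ) ?_
    exact (hp _).not.mpr (zero_dvd_iff.not.mpr (orderOf_pos σ).ne')
  · have hprime := hv.prime_of_natCast_mem_iff hp0.ne' hp
    have hbot := htame _ (hv.ramificationSubgroup_normal hsmul 1)
      (hv.isPGroup_ramificationSubgroup_one hsmul hprime hp)
    exact Subgroup.mem_bot.mp (hbot ▸ hσ₁)
end

section
/- Let L be a field, v : L^× → ℤ an additive valuation, and G a finite group acting faithfully on L by field automorphisms such that v(σ(x)) = v(x) for every σ ∈ G and every nonzero x ∈ L. Let K = L^G and let k ⊆ K be a subfield with v(k^×) = ℤ. Let L₀ be the residue field of v, let K₀ be the residue field of the restriction of v to K (so K₀ embeds naturally in L₀), and let p = char(L₀) ≥ 0. Assume that G is weakly tame at p. Then the fixed field (L₀)^G of the induced G-action on L₀ equals the image of K₀ in L₀, and [L₀ : K₀] = |G|. -/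
/-!
Let `I ≤ G` be the kernel of the action on the residue field `L₀`. Since `k ⊆ L^G` realises every
value of `v`, every `x ≠ 0` is `u * c` with `u` a unit and `c` fixed by `G`, so each `σ ∈ I`
satisfies `v (σ x - x) > v x`. If moreover `σ ^ n = 1` and `u = σ x - x ≠ 0`, the orbit sum of `u`
vanishes, hence `n * u = -∑ (σ ^ i u - u)` has valuation `> v u`, so `n = 0` in `L₀`. Thus every
prime dividing `|I|` is `char L₀`, and weak tameness forces `I = 1`: `G` acts faithfully on `L₀`
and Artin's theorem gives `[L₀ : L₀^G] = |G|`. On the other hand `K₀`-independent residues lift to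
`K`-independent elements, so `[L₀ : K₀] ≤ [L : K] = |G|`; as `K₀ ⊆ L₀^G`, both are equalities.
-/

open Module

section IntValuation

variable {L : Type*} [Field L] (v : L → ℤ)
  (hmul : ∀ x y : L, x ≠ 0 → y ≠ 0 → v (x * y) = v x + v y)
  (hadd : ∀ x y : L, x ≠ 0 → y ≠ 0 → x + y ≠ 0 → min (v x) (v y) ≤ v (x + y))

open Classical in
noncomputable def intAddValuation : AddValuation L (WithTop ℤ) :=
  AddValuation.of (fun x => if x = 0 then ⊤ else (v x : WithTop ℤ)) (if_pos rfl)
    (by simpa using hmul 1 1 one_ne_zero one_ne_zero)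
    (fun x y => by
      by_cases hx : x = 0
      · simp [hx]
      by_cases hy : y = 0
      · simp [hy]
      by_cases hxy : x + y = 0
      · simp [hxy]
      simp only [hx, hy, hxy, if_false, ← WithTop.coe_min, WithTop.coe_le_coe]
      exact hadd x y hx hy hxy)
    (fun x y => by
      by_cases hx : x = 0
      · simp [hx]
      by_cases hy : y = 0
      · simp [hy]
      simp [hx, hy, hmul x y hx hy])

variable {v hmul hadd}

lemma intAddValuation_of_ne_zero {x : L} (hx : x ≠ 0) : intAddValuation v hmul hadd x = v x :=
  if_neg hx

lemma intAddValuation_nonneg_iff {x : L} :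
    0 ≤ intAddValuation v hmul hadd x ↔ x = 0 ∨ 0 ≤ v x := by
  by_cases hx : x = 0
  · simp [hx]
  · simp [intAddValuation_of_ne_zero hx, hx]

lemma intAddValuation_pos_iff {x : L} :
    0 < intAddValuation v hmul hadd x ↔ x = 0 ∨ 1 ≤ v x := by
  by_cases hx : x = 0
  · simp [hx]
  · simp only [intAddValuation_of_ne_zero hx, hx, false_or, WithTop.coe_pos]
    omega

lemma intAddValuation_smul {G : Type*} [Group G] [MulSemiringAction G L]
    (hinv : ∀ (σ : G) (x : L), x ≠ 0 → v (σ • x) = v x) (σ : G) (x : L) :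
    intAddValuation v hmul hadd (σ • x) = intAddValuation v hmul hadd x := by
  rcases eq_or_ne x 0 with rfl | hx
  · rw [smul_zero]
  rw [intAddValuation_of_ne_zero hx, intAddValuation_of_ne_zero ((smul_ne_zero_iff_ne σ).2 hx),
    hinv σ x hx]

lemma exists_mem_intAddValuation_eq {k : Subfield L} (hsurj : ∀ m : ℤ, ∃ x ∈ k, x ≠ 0 ∧ v x = m)
    (x : L) : ∃ c ∈ k, intAddValuation v hmul hadd c = intAddValuation v hmul hadd x := by
  rcases eq_or_ne x 0 with rfl | hx
  · exact ⟨0, zero_mem k, rfl⟩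
  obtain ⟨c, hck, hc0, hc⟩ := hsurj (v x)
  exact ⟨c, hck, by rw [intAddValuation_of_ne_zero hc0, intAddValuation_of_ne_zero hx, hc]⟩

end IntValuation

theorem Subgroup.eq_bot_of_forall_prime_dvd_card_eq {G : Type*} [Group G] [Finite G] {p : ℕ}
    (htame : p = 0 ∨ (0 < p ∧ ∀ Q : Subgroup G, Q.Normal → IsPGroup p Q → Q = ⊥))
    (H : Subgroup G) [H.Normal] (hH : ∀ q : ℕ, q.Prime → q ∣ Nat.card H → q = p) : H = ⊥ := by
  rcases htame with rfl | ⟨-, htame⟩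
  · exact H.eq_bot_of_card_eq
      (Nat.eq_one_iff_not_exists_prime_dvd.2 fun q hq hdvd => hq.ne_zero (hH q hq hdvd))
  · exact htame H ‹_› (IsPGroup.of_card (Nat.eq_prime_pow_of_unique_prime_dvd Nat.card_pos.ne'
      fun hq hdvd => hH _ hq hdvd))

theorem FixedPoints.finrank_eq_natCard (G F : Type*) [Group G] [Finite G] [Field F]
    [MulSemiringAction G F] [FaithfulSMul G F] : finrank (subfield G F) F = Nat.card G := by
  have : Fintype G := Fintype.ofFinite G
  rw [Nat.card_eq_fintype_card]
  exact finrank_eq_card G F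

theorem FixedPoints.subfield_eq_and_finrank_eq_of_rank_le {G L₀ : Type*} [Group G] [Finite G]
    [Field L₀] [MulSemiringAction G L₀] [FaithfulSMul G L₀] {K₀ : Subfield L₀}
    (hle : K₀ ≤ FixedPoints.subfield G L₀) (hrank : Module.rank K₀ L₀ ≤ Nat.card G) :
    FixedPoints.subfield G L₀ = K₀ ∧ finrank K₀ L₀ = Nat.card G := by
  have : FiniteDimensional K₀ L₀ :=
    Module.rank_lt_aleph0_iff.1 (hrank.trans_lt Cardinal.natCast_lt_aleph0)
  let F : IntermediateField K₀ L₀ :=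
    (FixedPoints.subfield G L₀).toIntermediateField fun x => hle x.2
  have hF : finrank F L₀ = Nat.card G := FixedPoints.finrank_eq_natCard G L₀
  have hFbot : ⊥ = F := IntermediateField.eq_of_le_of_finrank_le' bot_le <| by
    rw [hF, IntermediateField.finrank_bot']
    exact finrank_le_of_rank_le hrank
  refine ⟨le_antisymm (fun z hz => ?_) hle, ?_⟩
  · have hz' : z ∈ (⊥ : IntermediateField K₀ L₀) := hFbot ▸ hz
    obtain ⟨c, rfl⟩ := IntermediateField.mem_bot.1 hz'
    exact c.2
  · rw [← IntermediateField.finrank_bot', hFbot, hF]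

section Valuation

variable {L Γ : Type*} [Field L] [LinearOrderedAddCommGroupWithTop Γ] (w : AddValuation L Γ)
  {G : Type*} [Group G] [MulSemiringAction G L]

theorem AddValuation.lt_map_pow_smul_sub_self (hinv : ∀ (g : G) (x : L), w (g • x) = w x)
    {σ : G} (hσ : ∀ x : L, x ≠ 0 → w x < w (σ • x - x)) {x : L} (hx : x ≠ 0) (n : ℕ) :
    w x < w (σ ^ n • x - x) := by
  induction n with
  | zero => simpa [w.map_zero, lt_top_iff_ne_top] using hx
  | succ n ih =>
    have hsplit : σ ^ (n + 1) • x - x = σ ^ n • (σ • x - x) + (σ ^ n • x - x) := by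
      rw [smul_sub, pow_succ, mul_smul]; abel
    rw [hsplit]
    exact w.map_lt_add (by rw [hinv]; exact hσ x hx) ih

theorem AddValuation.pos_map_natCast_of_pow_eq_one (hinv : ∀ (g : G) (x : L), w (g • x) = w x)
    {σ : G} (hσ : ∀ x : L, x ≠ 0 → w x < w (σ • x - x)) {n : ℕ} (hn : σ ^ n = 1) {x : L}
    (hx : σ • x ≠ x) : 0 < w (n : L) := by
  set u := σ • x - x
  have hu : u ≠ 0 := sub_ne_zero.2 hx
  have horbit : ∑ i ∈ Finset.range n, σ ^ i • u = 0 := by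
    simp only [u, smul_sub, ← mul_smul, ← pow_succ, Finset.sum_range_sub (fun i => σ ^ i • x), hn,
      pow_zero, sub_self]
  have hnu : (n : L) * u = -∑ i ∈ Finset.range n, (σ ^ i • u - u) := by
    simp [Finset.sum_sub_distrib, horbit]
  have hlt : w u < w ((n : L) * u) := by
    rw [hnu, w.map_neg]
    exact w.map_lt_sum (w.ne_top_iff.2 hu) fun i _ => w.lt_map_pow_smul_sub_self hinv hσ hu i
  refine (add_lt_add_iff_left_of_ne_top (w.ne_top_iff.2 hu)).1 ?_
  rwa [zero_add, ← w.map_mul]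

open LinearOrderedAddCommGroupWithTop in
theorem AddValuation.nonneg_map_div_of_le {x y : L} (hy : y ≠ 0) (hle : w y ≤ w x) :
    0 ≤ w (x / y) := by
  have hy' : w y ≠ ⊤ := w.ne_top_iff.2 hy
  rw [w.map_div, ← (sub_self_eq_zero_iff_ne_top).2 hy']
  exact (sub_le_sub_iff_left_of_ne_top hy').2 hle

variable {w} {O : Subring L} (hO : ∀ x : L, x ∈ O ↔ 0 ≤ w x) {L₀ : Type*} [Field L₀]
  {ρ : O →+* L₀}
include hO

theorem AddValuation.linearIndependent_of_linearIndependent_residue (K : Subfield L)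
    (K₀ : Subfield L₀) (hK : ∀ x : O, (x : L) ∈ K → ρ x ∈ K₀) {ι : Type*} [Fintype ι]
    {f : ι → O} (hf : LinearIndependent K₀ fun i => ρ (f i)) :
    LinearIndependent K fun i => (f i : L) := by
  -- Divide a relation by a coefficient of least valuation and reduce it modulo the maximal ideal.
  rw [Fintype.linearIndependent_iff] at hf ⊢
  intro a ha
  by_contra! hne
  obtain ⟨j, hj⟩ := hne
  obtain ⟨i₀, -, hmin⟩ :=
    Finset.univ.exists_min_image (fun i => w (a i : L)) ⟨j, Finset.mem_univ j⟩
  have ha₀ : (a i₀ : L) ≠ 0 := by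
    intro h
    have := hmin j (Finset.mem_univ j)
    rw [h, w.map_zero, top_le_iff, w.top_iff] at this
    exact hj (Subtype.ext this)
  let b : ι → O := fun i =>
    ⟨a i / a i₀, (hO _).2 (w.nonneg_map_div_of_le ha₀ (hmin i (Finset.mem_univ i)))⟩
  have hb : ∀ i, (b i : L) ∈ K := fun i => K.div_mem (a i).2 (a i₀).2
  have hsum : ∑ i, b i * f i = 0 := by
    apply Subtype.ext
    push_cast
    simp_rw [b, div_mul_eq_mul_div, ← Finset.sum_div]
    simp only [Subfield.smul_def, smul_eq_mul] at ha
    rw [ha, zero_div]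
  have hres := hf (fun i => ⟨ρ (b i), hK _ (hb i)⟩)
    (by simpa [Subfield.smul_def] using congrArg ρ hsum) i₀
  have hb₀ : b i₀ = 1 := Subtype.ext (div_self ha₀)
  simp [hb₀, Subtype.ext_iff] at hres

theorem AddValuation.rank_residue_le_finrank (hρ : Function.Surjective ρ) (K : Subfield L)
    (K₀ : Subfield L₀) (hK : ∀ x : O, (x : L) ∈ K → ρ x ∈ K₀) [FiniteDimensional K L] :
    Module.rank K₀ L₀ ≤ finrank K L := by
  refine rank_le fun s hs => ?_
  have hlift := linearIndependent_of_linearIndependent_residue hO K K₀ hK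
    (f := fun i : s => Function.surjInv hρ i) (by simpa [Function.surjInv_eq hρ] using hs)
  simpa using hlift.fintype_card_le_finrank

variable [MulSemiringAction G L₀] (hker : ∀ x : O, ρ x = 0 ↔ 0 < w x)
  (hcompat : ∀ (σ : G) (x : O) (hx : σ • (x : L) ∈ O), ρ ⟨σ • (x : L), hx⟩ = σ • ρ x)
  (hinv : ∀ (g : G) (x : L), w (g • x) = w x)
include hker hcompat hinv

theorem AddValuation.lt_map_smul_sub_self_of_fixes_residueField {σ : G}
    (hσ : ∀ z : L₀, σ • z = z) (hvals : ∀ x : L, ∃ c : L, σ • c = c ∧ w c = w x) {x : L}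
    (hx : x ≠ 0) :
    w x < w (σ • x - x) := by
  obtain ⟨c, hσc, hc⟩ := hvals x
  have hxtop : w x ≠ ⊤ := w.ne_top_iff.2 hx
  have hc0 : c ≠ 0 := w.ne_top_iff.1 (hc ▸ hxtop)
  set u := x / c
  have hu : u ∈ O := (hO u).2 (w.nonneg_map_div_of_le hc0 hc.le)
  have hσu : σ • u ∈ O := (hO _).2 (by rw [hinv]; exact (hO u).1 hu)
  have hdiff : 0 < w (σ • u - u) := by
    simpa using (hker (⟨σ • u, hσu⟩ - ⟨u, hu⟩)).1 (by
      rw [_root_.map_sub, sub_eq_zero]; exact (hcompat σ ⟨u, hu⟩ hσu).trans (hσ _))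
  have hxu : σ • x - x = (σ • u - u) * c := by
    have hx' : x = u * c := (div_mul_cancel₀ x hc0).symm
    calc σ • x - x = σ • (u * c) - u * c := by rw [← hx']
      _ = (σ • u - u) * c := by rw [smul_mul', hσc, sub_mul]
  rw [hxu, w.map_mul, hc]
  simpa using (add_lt_add_iff_left_of_ne_top hxtop).2 hdiff

theorem AddValuation.natCast_orderOf_eq_zero_of_fixes_residueField [FaithfulSMul G L]
    {σ : G} (hσ : ∀ z : L₀, σ • z = z)
    (hvals : ∀ x : L, ∃ c : L, σ • c = c ∧ w c = w x) (hσ1 : σ ≠ 1) :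
    (orderOf σ : L₀) = 0 := by
  obtain ⟨x, hx⟩ : ∃ x : L, σ • x ≠ x := by
    by_contra! h
    exact hσ1 (faithfulSMul_iff.1 ‹_› σ h)
  have hpos := w.pos_map_natCast_of_pow_eq_one hinv
    (fun _ => lt_map_smul_sub_self_of_fixes_residueField hO hker hcompat hinv hσ hvals)
    (pow_orderOf_eq_one σ) hx
  simpa using (hker (orderOf σ)).2 (by simpa using hpos)

theorem AddValuation.faithfulSMul_residueField [Finite G] [FaithfulSMul G L]
    (hvals : ∀ x : L, ∃ c ∈ FixedPoints.subfield G L, w c = w x) {p : ℕ} [CharP L₀ p]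
    (htame : p = 0 ∨ (0 < p ∧ ∀ Q : Subgroup G, Q.Normal → IsPGroup p Q → Q = ⊥)) :
    FaithfulSMul G L₀ := by
  let I := (MulAction.toPermHom G L₀).ker
  have hchar : ∀ q : ℕ, q.Prime → q ∣ Nat.card I → q = p := by
    intro q hq hdvd
    have := Fact.mk hq
    obtain ⟨τ, hτ⟩ := exists_prime_orderOf_dvd_card' q hdvd
    have hτ1 : (τ : G) ≠ 1 := by
      rw [Ne, OneMemClass.coe_eq_one, ← orderOf_eq_one_iff, hτ]
      exact hq.ne_one
    have hq0 : (q : L₀) = 0 := by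
      rw [← hτ, ← Subgroup.orderOf_coe]
      exact natCast_orderOf_eq_zero_of_fixes_residueField hO hker hcompat hinv
        (fun z => DFunLike.congr_fun τ.2 z) (fun y => (hvals y).imp fun c hc => ⟨hc.1 τ, hc.2⟩) hτ1
    exact (((Nat.dvd_prime hq).1 ((CharP.cast_eq_zero_iff L₀ p q).1 hq0)).resolve_left
      (CharP.char_ne_one L₀ p)).symm
  have hIbot := I.eq_bot_of_forall_prime_dvd_card_eq htame hchar
  refine faithfulSMul_iff.2 fun g hg => ?_
  exact Subgroup.mem_bot.1 (hIbot ▸ (Equiv.ext hg : MulAction.toPerm g = 1))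

end Valuation

/-- Let `L` be a field with an additive valuation `v : L^× → ℤ` and `G` a
finite group acting faithfully on `L` by field automorphisms preserving `v`. Let `K = L^G`,
`k ⊆ K` a subfield with `v(k^×) = ℤ`, and let `p = char(L₀) ≥ 0`, where `L₀` is the residue
field of `v`. Assume `G` is weakly tame at `p`. Then the fixed field `(L₀)^G` of the induced
`G`-action on `L₀` equals the image `K₀` of the residue field of `v|_K`, and
`[L₀ : K₀] = |G|`.

The residue field is presented as data: a subring `O` (the valuation ring, characterized by
`hO`), a field `L₀` with a surjective ring homomorphism `ρ : O → L₀` whose kernel is the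
maximal ideal (characterized by `hker`), the induced `G`-action on `L₀` (characterized by
`hcompat`), and the subfield `K₀ = ρ(O ∩ K)` (characterized by `hK₀`). -/
theorem fixed_subfield_of_residue_eq_and_finrank
    {L : Type*} [Field L] (v : L → ℤ)
    (hmul : ∀ x y : L, x ≠ 0 → y ≠ 0 → v (x * y) = v x + v y)
    (hadd : ∀ x y : L, x ≠ 0 → y ≠ 0 → x + y ≠ 0 → min (v x) (v y) ≤ v (x + y))
    {G : Type*} [Group G] [Finite G] [MulSemiringAction G L] [FaithfulSMul G L]
    (hinv : ∀ (σ : G) (x : L), x ≠ 0 → v (σ • x) = v x)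
    (k : Subfield L) (hk : k ≤ FixedPoints.subfield G L)
    (hsurj : ∀ m : ℤ, ∃ x ∈ k, x ≠ 0 ∧ v x = m)
    (O : Subring L) (hO : ∀ x : L, x ∈ O ↔ (x = 0 ∨ 0 ≤ v x))
    (L₀ : Type*) [Field L₀] (ρ : ↥O →+* L₀)
    (hρ : Function.Surjective ρ)
    (hker : ∀ x : ↥O, ρ x = 0 ↔ ((x : L) = 0 ∨ 1 ≤ v (x : L)))
    (p : ℕ) [CharP L₀ p]
    (htame : p = 0 ∨ (0 < p ∧ ∀ Q : Subgroup G, Q.Normal → IsPGroup p ↥Q → Q = ⊥))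
    [MulSemiringAction G L₀]
    (hstable : ∀ (σ : G) (x : ↥O), σ • (x : L) ∈ O)
    (hcompat : ∀ (σ : G) (x : ↥O), ρ ⟨σ • (x : L), hstable σ x⟩ = σ • ρ x)
    (K₀ : Subfield L₀)
    (hK₀ : ∀ z : L₀, z ∈ K₀ ↔ ∃ x : ↥O, (∀ σ : G, σ • (x : L) = (x : L)) ∧ ρ x = z) :
    FixedPoints.subfield G L₀ = K₀ ∧ Module.finrank ↥K₀ L₀ = Nat.card G := by
  set w := intAddValuation v hmul hadd
  have hO' : ∀ x : L, x ∈ O ↔ 0 ≤ w x := fun x => (hO x).trans intAddValuation_nonneg_iff.symm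
  have hker' : ∀ x : O, ρ x = 0 ↔ 0 < w x := fun x => (hker x).trans intAddValuation_pos_iff.symm
  have hvals : ∀ x : L, ∃ c ∈ FixedPoints.subfield G L, w c = w x := fun x =>
    (exists_mem_intAddValuation_eq hsurj x).imp fun _ hc => ⟨hk hc.1, hc.2⟩
  have := w.faithfulSMul_residueField hO' hker' (fun σ x _ => hcompat σ x)
    (intAddValuation_smul hinv) hvals htame
  have hle : K₀ ≤ FixedPoints.subfield G L₀ := by
    intro z hz σ
    obtain ⟨x, hfix, rfl⟩ := (hK₀ z).1 hz
    rw [← hcompat]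
    exact congrArg ρ (Subtype.ext (hfix σ))
  have hrank := w.rank_residue_le_finrank hO' hρ (FixedPoints.subfield G L) K₀
    fun x hx => (hK₀ _).2 ⟨x, fun σ => hx σ, rfl⟩
  rw [FixedPoints.finrank_eq_natCard] at hrank
  exact FixedPoints.subfield_eq_and_finrank_eq_of_rank_le hle hrank
end
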